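/- arXiv:0705.4662 — 3 statements merged into one kernel-verified Lean document; each statement's English description precedes it below -/
import Mathlib

section
/- For every n ≥ 1 and every element (x, j) of the lamplighter group G, the word metric satisfies both ρ((x, j), (∅, 0)) ≥ d_{Cₙ}(0, j) and, for every k ∈ x, ρ((x, j), (∅, 0)) ≥ d_{Cₙ}(0, k) + 1. -/
open Finset

/-- The lamplighter group `C₂ ≀ Cₙ`: pairs `(x, j)` of a finite subset `x` of `ZMod n`
(the set of lit lamps) and a position `j ∈ ZMod n`. -/
abbrev LL (n : ℕ) : Type := Finset (ZMod n) × ZMod n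

namespace LL

/-- Multiplication `(x, g)·(y, k) = (x △ (y − g), g + k)` where
`y − g = {h : g + h ∈ y}`. -/
def gmul {n : ℕ} (a b : LL n) : LL n :=
  (symmDiff a.1 (b.1.image (fun h => h - a.2)), a.2 + b.2)

def gone (n : ℕ) : LL n := (∅, 0)

def ginv {n : ℕ} (a : LL n) : LL n := (a.1.image (fun h => h + a.2), -a.2)

instance instGroup (n : ℕ) : Group (LL n) where
  mul := gmul
  one := gone n
  inv := ginv
  mul_assoc a b c := by
    show gmul (gmul a b) c = gmul a (gmul b c)
    unfold gmul
    refine Prod.ext ?_ (add_assoc _ _ _)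
    simp only
    rw [Finset.image_symmDiff _ _ (sub_left_injective), Finset.image_image,
      symmDiff_assoc]
    congr 2
    ext t
    simp [sub_sub, add_comm]
  one_mul a := by
    show gmul (gone n) a = a
    unfold gmul gone
    refine Prod.ext ?_ (zero_add _)
    simp only [← Finset.bot_eq_empty, bot_symmDiff]
    simp
  mul_one a := by
    show gmul a (gone n) = a
    unfold gmul gone
    refine Prod.ext ?_ (add_zero _)
    show symmDiff a.1 (Finset.image _ ∅) = a.1
    rw [Finset.image_empty]
    exact symmDiff_bot a.1
  inv_mul_cancel a := by
    show gmul (ginv a) a = gone n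
    unfold gmul ginv gone
    refine Prod.ext ?_ (neg_add_cancel _)
    simp only
    have h : (fun h => h - -a.2) = (fun h : ZMod n => h + a.2) := by
      funext t; rw [sub_neg_eq_add]
    rw [h, symmDiff_self, Finset.bot_eq_empty]

end LL

/-- The word "distance" associated to a set `T ⊆ G`: the least `L` such
that `a⁻¹ * b` is a product of `L` elements of `T`. -/
noncomputable def wordDist {G : Type*} [Group G] (T : Set G) (a b : G) : ℕ :=
  sInf {L : ℕ | ∃ l : List G, l.length = L ∧ (∀ g ∈ l, g ∈ T) ∧ l.prod = a⁻¹ * b}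

/-- The two standard generators `s₁ = ({0}, 0)` and `s₂ = (∅, 1)` of the
lamplighter group. -/
def lampGens (n : ℕ) : Set (LL n) :=
  {(({0} : Finset (ZMod n)), (0 : ZMod n)), ((∅ : Finset (ZMod n)), (1 : ZMod n))}

/-- The word metric `ρ` on the lamplighter group with respect to
`{s₁, s₂, s₁⁻¹, s₂⁻¹}`. -/
noncomputable def lampRho (n : ℕ) (a b : LL n) : ℕ :=
  wordDist (lampGens n ∪ (lampGens n)⁻¹) a b


/-- The cycle metric on `ZMod n`: the least `|a|` over integers `a` with
`a ≡ j - k (mod n)`. -/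
noncomputable def cycDist (n : ℕ) (j k : ZMod n) : ℕ :=
  sInf {m : ℕ | ∃ a : ℤ, a.natAbs = m ∧ (a : ZMod n) = j - k}


/-!
Since the generating set is symmetric, `ρ((x, j), 1)` is the length of a shortest word
for `(x, j)`. Reading such a word letter by letter, each letter moves the lamplighter by at
most one step of the cycle, so after `i` letters it stands within cycle distance `i` of `0`;
in particular the end position `j` is within distance `ρ`. Standing at `g`, the letter `s₁`
toggles the lamp at `-g`, so a lamp `k` that ends up lit was toggled from position `-k` after
strictly fewer than `ρ` letters.
-/

section WordDist

variable {G : Type*} [Group G] {T : Set G}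

lemma le_wordDist {a b : G} {m : ℕ}
    (hgen : ∃ l : List G, (∀ g ∈ l, g ∈ T) ∧ l.prod = a⁻¹ * b)
    (hle : ∀ l : List G, (∀ g ∈ l, g ∈ T) → l.prod = a⁻¹ * b → m ≤ l.length) :
    m ≤ wordDist T a b := by
  obtain ⟨l, hlT, hl⟩ := hgen
  refine le_csInf ⟨l.length, l, rfl, hlT, hl⟩ ?_
  rintro _ ⟨l, rfl, hlT, hl⟩
  exact hle l hlT hl

lemma exists_word_prod_inv (hT : T⁻¹ = T) {l : List G} (hlT : ∀ g ∈ l, g ∈ T) :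
    ∃ l' : List G, l'.length = l.length ∧ (∀ g ∈ l', g ∈ T) ∧ l'.prod = l.prod⁻¹ := by
  refine ⟨(l.map fun g => g⁻¹).reverse, by simp, ?_, (List.prod_inv_reverse l).symm⟩
  intro g hg
  obtain ⟨h, hh, rfl⟩ := List.mem_map.1 (List.mem_reverse.1 hg)
  rw [← hT]
  exact Set.inv_mem_inv.2 (hlT h hh)

lemma wordDist_comm (hT : T⁻¹ = T) (a b : G) : wordDist T a b = wordDist T b a := by
  unfold wordDist
  congr 1
  ext L
  constructor <;>
  · rintro ⟨l, rfl, hlT, hl⟩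
    obtain ⟨l', hlen, hl'T, hl'⟩ := exists_word_prod_inv hT hlT
    exact ⟨l', hlen, hl'T, by rw [hl', hl, mul_inv_rev, inv_inv]⟩

lemma exists_word_of_closure_eq_top {S : Set G} (hS : Subgroup.closure S = ⊤) (g : G) :
    ∃ l : List G, (∀ x ∈ l, x ∈ S ∪ S⁻¹) ∧ l.prod = g := by
  apply Submonoid.exists_list_of_mem_closure
  rw [← Subgroup.closure_toSubmonoid, hS]
  exact Subgroup.mem_top g

end WordDist

lemma cycDist_le_of_intCast_eq {n : ℕ} {j k : ZMod n} {m : ℕ} (a : ℤ)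
    (ha : (a : ZMod n) = j - k) (hm : a.natAbs ≤ m) : cycDist n j k ≤ m :=
  le_trans (Nat.sInf_le ⟨a, rfl, ha⟩) hm

namespace LL

variable {n : ℕ}

lemma mul_def (a b : LL n) : a * b = (symmDiff a.1 (b.1.image (· - a.2)), a.2 + b.2) := rfl

lemma inv_def (a : LL n) : a⁻¹ = (a.1.image (· + a.2), -a.2) := rfl

lemma one_def : (1 : LL n) = (∅, 0) := rfl

lemma lampRho_comm (a b : LL n) : lampRho n a b = lampRho n b a :=
  wordDist_comm (by rw [Set.union_inv, inv_inv, Set.union_comm]) a b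

lemma eq_of_mem_lampGens_union_inv {g : LL n} (hg : g ∈ lampGens n ∪ (lampGens n)⁻¹) :
    g = ({0}, 0) ∨ g = (∅, 1) ∨ g = (∅, -1) := by
  rcases hg with (rfl | rfl) | (hg | hg)
  · exact Or.inl rfl
  · exact Or.inr (Or.inl rfl)
  · left; rw [← inv_inv g, hg]; simp [inv_def]
  · right; right; rw [← inv_inv g, hg]; simp [inv_def]

lemma mk_empty_mem_closure_lampGens (p : ZMod n) :
    ((∅, p) : LL n) ∈ Subgroup.closure (lampGens n) := by
  have hs : ((∅, 1) : LL n) ∈ Subgroup.closure (lampGens n) :=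
    Subgroup.subset_closure (Or.inr rfl)
  obtain ⟨m, rfl⟩ := ZMod.intCast_surjective p
  induction m using Int.induction_on with
  | zero => simpa [one_def] using one_mem (Subgroup.closure (lampGens n))
  | succ m ih =>
    have h : ((∅, ((m + 1 : ℤ) : ZMod n)) : LL n) = (∅, ((m : ℤ) : ZMod n)) * (∅, 1) := by
      simp [mul_def]
    exact h ▸ mul_mem ih hs
  | pred m ih =>
    have h : ((∅, ((-m - 1 : ℤ) : ZMod n)) : LL n) = (∅, ((-m : ℤ) : ZMod n)) * (∅, 1)⁻¹ := by
      simp [mul_def, inv_def, sub_eq_add_neg]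
    exact h ▸ mul_mem ih (inv_mem hs)

lemma closure_lampGens : Subgroup.closure (lampGens n) = ⊤ := by
  have hlamp (k : ZMod n) : (({k}, 0) : LL n) ∈ Subgroup.closure (lampGens n) := by
    have h : (({k}, 0) : LL n) = (∅, -k) * ({0}, 0) * (∅, k) := by simp [mul_def]
    exact h ▸ mul_mem (mul_mem (mk_empty_mem_closure_lampGens _)
      (Subgroup.subset_closure (Or.inl rfl))) (mk_empty_mem_closure_lampGens _)
  have hlamps (x : Finset (ZMod n)) : ((x, 0) : LL n) ∈ Subgroup.closure (lampGens n) := by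
    induction x using Finset.induction_on with
    | empty => exact one_mem _
    | insert k y hky ih =>
      have h : ((insert k y, 0) : LL n) = ({k}, 0) * (y, 0) := by
        simp [mul_def, (symmDiff_eq_sup _ _).2 (Finset.disjoint_singleton_left.2 hky)]
      exact h ▸ mul_mem (hlamp k) ih
  refine eq_top_iff.2 fun g _ => ?_
  have h : g = (g.1, 0) * (∅, g.2) := by simp [mul_def, ← Finset.bot_eq_empty]
  exact h ▸ mul_mem (hlamps g.1) (mk_empty_mem_closure_lampGens g.2)

lemma exists_intCast_eq_prod_snd {l : List (LL n)}
    (hlT : ∀ g ∈ l, g ∈ lampGens n ∪ (lampGens n)⁻¹) :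
    ∃ a : ℤ, a.natAbs ≤ l.length ∧ (a : ZMod n) = l.prod.2 := by
  induction l with
  | nil => exact ⟨0, by simp [one_def]⟩
  | cons g l ih =>
    obtain ⟨a, ha, hpos⟩ := ih fun h hh => hlT h (List.mem_cons_of_mem _ hh)
    obtain ⟨e, he, hstep⟩ : ∃ e : ℤ, e.natAbs ≤ 1 ∧ (e : ZMod n) = g.2 := by
      rcases eq_of_mem_lampGens_union_inv (hlT g List.mem_cons_self) with rfl | rfl | rfl
      exacts [⟨0, by simp⟩, ⟨1, by simp⟩, ⟨-1, by simp⟩]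
    refine ⟨e + a, ?_, ?_⟩
    · have := Int.natAbs_add_le e a
      simp only [List.length_cons]
      omega
    · rw [List.prod_cons, Int.cast_add, hstep, hpos]
      rfl

lemma exists_take_prod_snd_eq_neg {l : List (LL n)}
    (hlT : ∀ g ∈ l, g ∈ lampGens n ∪ (lampGens n)⁻¹) {k : ZMod n} (hk : k ∈ l.prod.1) :
    ∃ i < l.length, (l.take i).prod.2 = -k := by
  induction l generalizing k with
  | nil => simp [one_def] at hk
  | cons g l ih =>
    rw [List.prod_cons, mul_def, Finset.mem_symmDiff] at hk
    rcases hk with ⟨hk, -⟩ | ⟨hk, -⟩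
    · refine ⟨0, by simp, ?_⟩
      rcases eq_of_mem_lampGens_union_inv (hlT g List.mem_cons_self) with rfl | rfl | rfl <;>
        simp_all [one_def]
    · obtain ⟨h, hh, rfl⟩ := Finset.mem_image.1 hk
      obtain ⟨i, hi, hpos⟩ := ih (fun x hx => hlT x (List.mem_cons_of_mem _ hx)) hh
      refine ⟨i + 1, by simpa using hi, ?_⟩
      rw [List.take_succ_cons, List.prod_cons, mul_def]
      simp [hpos, sub_eq_add_neg]

lemma cycDist_zero_prod_snd_le_length {l : List (LL n)}
    (hlT : ∀ g ∈ l, g ∈ lampGens n ∪ (lampGens n)⁻¹) : cycDist n 0 l.prod.2 ≤ l.length := by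
  obtain ⟨a, ha, hpos⟩ := exists_intCast_eq_prod_snd hlT
  exact cycDist_le_of_intCast_eq (-a) (by rw [Int.cast_neg, hpos, zero_sub]) (by simpa using ha)

lemma cycDist_zero_lt_length_of_mem {l : List (LL n)}
    (hlT : ∀ g ∈ l, g ∈ lampGens n ∪ (lampGens n)⁻¹) {k : ZMod n} (hk : k ∈ l.prod.1) :
    cycDist n 0 k < l.length := by
  obtain ⟨i, hi, hpos⟩ := exists_take_prod_snd_eq_neg hlT hk
  obtain ⟨a, ha, ha'⟩ := exists_intCast_eq_prod_snd fun g hg => hlT g (List.mem_of_mem_take hg)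
  refine lt_of_le_of_lt (cycDist_le_of_intCast_eq a (by rw [ha', hpos, zero_sub]) ?_) hi
  exact ha.trans (List.length_take_le _ _)

end LL

/-- The word metric is at least `d_{Cₙ}(0,j)`, and at least
`d_{Cₙ}(0,k) + 1` for every lit lamp `k ∈ x`. -/
theorem lamplighter_word_metric_lower :
    ∀ n : ℕ, 1 ≤ n → ∀ (x : Finset (ZMod n)) (j : ZMod n),
      cycDist n 0 j ≤ lampRho n (x, j) ((∅ : Finset (ZMod n)), (0 : ZMod n)) ∧
        ∀ k ∈ x, cycDist n 0 k + 1 ≤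
          lampRho n (x, j) ((∅ : Finset (ZMod n)), (0 : ZMod n)) := by
  intro n _ x j
  rw [← LL.one_def, LL.lampRho_comm]
  have hgen := exists_word_of_closure_eq_top LL.closure_lampGens ((1 : LL n)⁻¹ * (x, j))
  refine ⟨le_wordDist hgen fun l hlT hl => ?_, fun k hk => le_wordDist hgen fun l hlT hl => ?_⟩
  all_goals rw [inv_one, one_mul] at hl
  · simpa [hl] using LL.cycDist_zero_prod_snd_le_length hlT
  · exact LL.cycDist_zero_lt_length_of_mem hlT (by rwa [hl])
end

section
/- There exists a universal constant C > 0 such that for every n ≥ 3: Σ_{I ∈ 𝓘} Σ_{A ⊆ I} Σ_{k ∈ ZMod n} (v^I_{k+1} − v^I_k)² ≤ C·log n, where log is the natural logarithm. -/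
open Finset

/-- The arc `{a, a+1, …, a + (⌊n/3⌋ - 1)}` of length `m = ⌊n/3⌋` in `ZMod n`.
As `a` ranges over `ZMod n` this produces the family `𝓘` of all `n` such arcs. -/
def arc (n : ℕ) (a : ZMod n) : Finset (ZMod n) :=
  (Finset.range (n / 3)).image (fun i : ℕ => a + (i : ZMod n))

/-- distance from a point `k` to the arc starting at `a`: `min_{i ∈ I} d_{Cₙ}(k, i)`. -/
noncomputable def dArc (n : ℕ) (a k : ZMod n) : ℕ :=
  sInf {m : ℕ | ∃ i ∈ arc n a, cycDist n k i = m}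

/-- `η = 1 / (n · 2^{n/6})`. -/
noncomputable def eta (n : ℕ) : ℝ := 1 / ((n : ℝ) * (2 : ℝ) ^ ((n : ℝ) / 6))

/-- `δ = 1 / (√n · 2^{n/6})`. -/
noncomputable def dlt (n : ℕ) : ℝ := 1 / (Real.sqrt n * (2 : ℝ) ^ ((n : ℝ) / 6))

/-- The vector `v^I` attached to the arc `I` starting at `a`:
`v^I_k = η` for `k ∈ I` and `v^I_k = δ·√(d(k, I))` for `k ∉ I`. -/
noncomputable def vI (n : ℕ) (a k : ZMod n) : ℝ :=
  if k ∈ arc n a then eta n else dlt n * Real.sqrt (dArc n a k)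

/-! Each of the `2^m` subsets `A ⊆ I` contributes the same amount, so the sum is `n · 2^m` times
the Dirichlet energy of a single `v^I`. Write `v^I_k = g(d(k, I))` with `g 0 = η` and
`g j = δ √j`. Since `d(·, I)` is `1`-Lipschitz along the cycle and `(√(j+1) - √j)² ≤ 1/j`, the step
`k → k+1` costs at most `δ² (1/d(k, I) + 1/d(k+1, I))`; the jump between `η ≤ δ` and `δ` costs at
most `δ²`. Off the arc, `d(·, I)` rises from `1` and falls back to `1`, taking each value at most
twice, so `Σ_k 1/d(k, I) ≤ 2 H_n ≤ 2 (1 + log n)`. Finally `δ² = 1/(n 2^{n/3}) ≤ 1/(n 2^m)`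
absorbs the factor `n · 2^m`. -/

open Real

section CycDist

variable {n : ℕ}

theorem cycDist_le_natAbs {j k : ZMod n} {a : ℤ} (ha : (a : ZMod n) = j - k) :
    cycDist n j k ≤ a.natAbs :=
  Nat.sInf_le ⟨a, rfl, ha⟩

theorem exists_natAbs_eq_cycDist (j k : ZMod n) :
    ∃ a : ℤ, a.natAbs = cycDist n j k ∧ (a : ZMod n) = j - k :=
  Nat.sInf_mem (s := {m : ℕ | ∃ a : ℤ, a.natAbs = m ∧ (a : ZMod n) = j - k})
    ⟨_, _, rfl, ZMod.intCast_zmod_cast (j - k)⟩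

theorem cycDist_eq_zero_iff {j k : ZMod n} : cycDist n j k = 0 ↔ j = k := by
  constructor
  · intro h
    obtain ⟨a, ha, hak⟩ := exists_natAbs_eq_cycDist j k
    rw [h, Int.natAbs_eq_zero] at ha
    rwa [ha, Int.cast_zero, eq_comm, sub_eq_zero] at hak
  · rintro rfl
    exact Nat.le_zero.mp (cycDist_le_natAbs (a := 0) (by simp))

theorem cycDist_add_intCast_le (j k : ZMod n) (b : ℤ) :
    cycDist n (j + b) k ≤ cycDist n j k + b.natAbs := by
  obtain ⟨a, ha, hak⟩ := exists_natAbs_eq_cycDist j k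
  calc cycDist n (j + b) k ≤ (a + b).natAbs :=
        cycDist_le_natAbs (by push_cast; rw [hak]; ring)
    _ ≤ cycDist n j k + b.natAbs := ha ▸ Int.natAbs_add_le a b

theorem cycDist_eq_min_val [NeZero n] (j k : ZMod n) :
    cycDist n j k = min (j - k).val (n - (j - k).val) := by
  have hv : (j - k).val < n := ZMod.val_lt _
  apply le_antisymm
  · rcases le_total (j - k).val (n - (j - k).val) with h | h
    · rw [min_eq_left h]
      exact cycDist_le_natAbs (j := j) (k := k) (a := (j - k).val)
        (by rw [Int.cast_natCast, ZMod.natCast_zmod_val])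
    · rw [min_eq_right h]
      exact (cycDist_le_natAbs (a := ((j - k).val : ℤ) - n)
        (by simp)).trans (by omega)
  · obtain ⟨a, ha, hak⟩ := exists_natAbs_eq_cycDist j k
    have hval : (((j - k).val : ℕ) : ℤ) = a % n := by rw [← hak, ZMod.val_intCast]
    have hdiv := Int.emod_add_mul_ediv a n
    have hn : (0 : ℤ) < n := by exact_mod_cast NeZero.pos n
    rcases lt_trichotomy (a / n) 0 with hq | hq | hq
    · have : (n : ℤ) * (a / n) ≤ -n := by nlinarith
      omega
    · rw [hq] at hdiv
      omega
    · have : (n : ℤ) ≤ n * (a / n) := by nlinarith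
      omega

end CycDist

section Arc

variable {n : ℕ}

theorem card_arc (a : ZMod n) : (arc n a).card = n / 3 := by
  rw [arc, card_image_of_injOn, card_range]
  intro i hi j hj hij
  simp only [coe_range, Set.mem_Iio] at hi hj
  have := congrArg ZMod.val (add_left_cancel hij)
  rwa [ZMod.val_cast_of_lt (by omega), ZMod.val_cast_of_lt (by omega)] at this

theorem arc_nonempty (h3 : 3 ≤ n) (a : ZMod n) : (arc n a).Nonempty := by
  rw [← card_pos, card_arc]
  omega

theorem add_natCast_mem_arc_iff (a : ZMod n) {t : ℕ} (ht : t < n) :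
    a + t ∈ arc n a ↔ t < n / 3 := by
  simp only [arc, mem_image, mem_range, add_right_inj]
  constructor
  · rintro ⟨i, hi, hit⟩
    have := congrArg ZMod.val hit
    rw [ZMod.val_cast_of_lt (by omega), ZMod.val_cast_of_lt ht] at this
    omega
  · exact fun h => ⟨t, h, rfl⟩

theorem dArc_le_cycDist {a i : ZMod n} (k : ZMod n) (hi : i ∈ arc n a) :
    dArc n a k ≤ cycDist n k i :=
  Nat.sInf_le ⟨i, hi, rfl⟩

theorem exists_cycDist_eq_dArc {a : ZMod n} (h : (arc n a).Nonempty) (k : ZMod n) :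
    ∃ i ∈ arc n a, cycDist n k i = dArc n a k :=
  Nat.sInf_mem (s := {m : ℕ | ∃ i ∈ arc n a, cycDist n k i = m})
    (h.elim fun i hi => ⟨_, i, hi, rfl⟩)

theorem dArc_eq_zero_iff {a k : ZMod n} (h : (arc n a).Nonempty) :
    dArc n a k = 0 ↔ k ∈ arc n a := by
  constructor
  · intro h0
    obtain ⟨i, hi, hki⟩ := exists_cycDist_eq_dArc h k
    exact cycDist_eq_zero_iff.mp (hki.trans h0) ▸ hi
  · intro hk
    exact Nat.le_zero.mp ((dArc_le_cycDist k hk).trans (cycDist_eq_zero_iff.mpr rfl).le)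

theorem dArc_add_intCast_le {a : ZMod n} (h : (arc n a).Nonempty) (k : ZMod n) (b : ℤ) :
    dArc n a (k + b) ≤ dArc n a k + b.natAbs := by
  obtain ⟨i, hi, hki⟩ := exists_cycDist_eq_dArc h k
  exact (dArc_le_cycDist _ hi).trans (hki ▸ cycDist_add_intCast_le k i b)

theorem dArc_add_natCast [NeZero n] (h3 : 3 ≤ n) (a : ZMod n) {t : ℕ} (ht : n / 3 ≤ t)
    (htn : t < n) : dArc n a (a + t) = min (t + 1 - n / 3) (n - t) := by
  have hdist : ∀ i < n / 3, cycDist n (a + t) (a + (i : ZMod n)) = min (t - i) (n - (t - i)) := by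
    intro i hi
    rw [cycDist_eq_min_val, add_sub_add_left_eq_sub, ← Nat.cast_sub (by omega),
      ZMod.val_cast_of_lt (by omega)]
  have hmem : ∀ i < n / 3, a + (i : ZMod n) ∈ arc n a := fun i hi =>
    (add_natCast_mem_arc_iff a (by omega)).mpr hi
  apply le_antisymm
  · rcases le_total (t + 1 - n / 3) (n - t) with h | h
    · have := dArc_le_cycDist (a + (t : ZMod n)) (hmem (n / 3 - 1) (by omega))
      rw [hdist _ (by omega)] at this
      omega
    · have := dArc_le_cycDist (a + (t : ZMod n)) (hmem 0 (by omega))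
      rw [hdist _ (by omega)] at this
      omega
  · obtain ⟨i, hi, hki⟩ := exists_cycDist_eq_dArc (arc_nonempty h3 a) (a + t)
    obtain ⟨i, hi', rfl⟩ := mem_image.mp hi
    have hi'' := mem_range.mp hi'
    rw [← hki, hdist i hi'']
    omega

end Arc

theorem sum_zmod_eq_sum_range_add {M : Type*} [AddCommMonoid M] {n : ℕ} [NeZero n]
    (f : ZMod n → M) (a : ZMod n) : ∑ k, f k = ∑ t ∈ range n, f (a + t) := by
  refine sum_nbij' (fun k => (k - a).val) (fun t => a + t) (fun k _ => ?_) (fun _ _ => mem_univ _)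
    (fun k _ => ?_) (fun t ht => ?_) (fun k _ => ?_)
  · exact mem_range.mpr (ZMod.val_lt _)
  · simp
  · simp [ZMod.val_cast_of_lt (mem_range.mp ht)]
  · simp

theorem sum_Ico_inv_min_le (m n : ℕ) :
    ∑ t ∈ Ico m n, ((min (t + 1 - m) (n - t) : ℕ) : ℝ)⁻¹ ≤ 2 * harmonic (n - m) := by
  have hterm : ∀ t ∈ Ico m n, ((min (t + 1 - m) (n - t) : ℕ) : ℝ)⁻¹ ≤
      ((t + 1 - m : ℕ) : ℝ)⁻¹ + ((n - t : ℕ) : ℝ)⁻¹ := by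
    intro t _
    rcases min_choice (t + 1 - m) (n - t) with h | h <;> rw [h]
    · exact le_add_of_nonneg_right (by positivity)
    · exact le_add_of_nonneg_left (by positivity)
  have hharm : ((harmonic (n - m) : ℚ) : ℝ) = ∑ i ∈ range (n - m), ((i + 1 : ℕ) : ℝ)⁻¹ := by
    simp [harmonic]
  have hup : ∑ t ∈ Ico m n, ((t + 1 - m : ℕ) : ℝ)⁻¹ = harmonic (n - m) := by
    rw [hharm, sum_Ico_eq_sum_range]
    exact sum_congr rfl fun i _ => by congr 3; omega
  have hdown : ∑ t ∈ Ico m n, ((n - t : ℕ) : ℝ)⁻¹ = harmonic (n - m) := by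
    rw [hharm, sum_Ico_eq_sum_range, ← sum_range_reflect]
    exact sum_congr rfl fun i hi => by have := mem_range.mp hi; congr 3; omega
  calc _ ≤ ∑ t ∈ Ico m n, (((t + 1 - m : ℕ) : ℝ)⁻¹ + ((n - t : ℕ) : ℝ)⁻¹) := sum_le_sum hterm
    _ = 2 * harmonic (n - m) := by rw [sum_add_distrib, hup, hdown]; ring

theorem sqrt_sub_sqrt_sq_le_inv {x y : ℝ} (hx : 0 < x) (hy : 0 ≤ y) (hxy : |y - x| ≤ 1) :
    (√y - √x) ^ 2 ≤ x⁻¹ := by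
  have hdiff : (√y - √x) * (√y + √x) = y - x := by
    rw [mul_comm, ← mul_self_sub_mul_self, Real.mul_self_sqrt hy, Real.mul_self_sqrt hx.le]
  have hsum : x ≤ (√y + √x) ^ 2 := by
    calc x = √x ^ 2 := (Real.sq_sqrt hx.le).symm
      _ ≤ (√y + √x) ^ 2 := by gcongr; exact le_add_of_nonneg_left (Real.sqrt_nonneg y)
  rw [← one_div, le_div_iff₀ hx]
  calc (√y - √x) ^ 2 * x ≤ (√y - √x) ^ 2 * (√y + √x) ^ 2 := by gcongr
    _ = (y - x) ^ 2 := by rw [← mul_pow, hdiff]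
    _ ≤ 1 := (sq_le_one_iff_abs_le_one _).mpr hxy

noncomputable def sqrtProfile (η δ : ℝ) (j : ℕ) : ℝ := if j = 0 then η else δ * √j

-- Relies on `(0 : ℝ)⁻¹ = 0`: for `x = 0` only the `y⁻¹` term pays for the jump `η → δ`.
theorem sqrtProfile_sub_sq_le {η δ : ℝ} (hη : 0 ≤ η) (hηδ : η ≤ δ) {x y : ℕ}
    (hxy : x ≤ y + 1) (hyx : y ≤ x + 1) :
    (sqrtProfile η δ y - sqrtProfile η δ x) ^ 2 ≤ δ ^ 2 * ((x : ℝ)⁻¹ + (y : ℝ)⁻¹) := by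
  wlog hle : x ≤ y generalizing x y
  · rw [add_comm, ← neg_sub, neg_sq]
    exact this hyx hxy (by omega)
  rcases Nat.eq_zero_or_pos x with rfl | hx
  · interval_cases y
    · simp [sqrtProfile]
    · simp [sqrtProfile]
      nlinarith
  · have hx' : (x : ℝ) ≤ y := by exact_mod_cast hle
    have hyx' : (y : ℝ) ≤ x + 1 := by exact_mod_cast hyx
    have hy : y ≠ 0 := by omega
    simp only [sqrtProfile, hx.ne', hy, if_false]
    rw [← mul_sub, mul_pow]
    gcongr
    calc (√y - √x) ^ 2 ≤ (x : ℝ)⁻¹ :=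
          sqrt_sub_sqrt_sq_le_inv (by positivity) (by positivity)
            (abs_le.mpr ⟨by linarith, by linarith⟩)
      _ ≤ (x : ℝ)⁻¹ + (y : ℝ)⁻¹ := le_add_of_nonneg_right (by positivity)

theorem eta_le_dlt {n : ℕ} (hn : 1 ≤ n) : eta n ≤ dlt n := by
  have hn' : (1 : ℝ) ≤ n := by exact_mod_cast hn
  unfold eta dlt
  gcongr
  rw [Real.sqrt_le_left (by positivity)]
  nlinarith

theorem dlt_sq_le {n : ℕ} (hn : 0 < n) : dlt n ^ 2 ≤ ((n : ℝ) * 2 ^ (n / 3))⁻¹ := by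
  have hdlt : dlt n ^ 2 = ((n : ℝ) * (2 : ℝ) ^ ((n : ℝ) / 3))⁻¹ := by
    rw [dlt, one_div, inv_pow, mul_pow, Real.sq_sqrt (Nat.cast_nonneg n),
      ← Real.rpow_mul_natCast (by norm_num)]
    ring_nf
  rw [hdlt, ← Real.rpow_natCast]
  gcongr
  · exact one_le_two
  · exact Nat.cast_div_le

section GradientOfVI

variable {n : ℕ}

theorem vI_eq_sqrtProfile (h3 : 3 ≤ n) (a k : ZMod n) :
    vI n a k = sqrtProfile (eta n) (dlt n) (dArc n a k) := by
  have hzero := dArc_eq_zero_iff (k := k) (arc_nonempty h3 a)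
  by_cases hk : k ∈ arc n a
  · rw [vI, if_pos hk, sqrtProfile, if_pos (hzero.mpr hk)]
  · rw [vI, if_neg hk, sqrtProfile, if_neg (mt hzero.mp hk)]

theorem sq_vI_add_one_sub_le (h3 : 3 ≤ n) (a k : ZMod n) :
    (vI n a (k + 1) - vI n a k) ^ 2 ≤
      dlt n ^ 2 * ((dArc n a k : ℝ)⁻¹ + (dArc n a (k + 1) : ℝ)⁻¹) := by
  have hne := arc_nonempty h3 a
  rw [vI_eq_sqrtProfile h3, vI_eq_sqrtProfile h3]
  refine sqrtProfile_sub_sq_le (by unfold eta; positivity) (eta_le_dlt (by omega)) ?_ ?_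
  · simpa using dArc_add_intCast_le hne (k + 1) (-1)
  · simpa using dArc_add_intCast_le hne k 1

theorem sum_inv_dArc_le [NeZero n] (h3 : 3 ≤ n) (a : ZMod n) :
    ∑ k, (dArc n a k : ℝ)⁻¹ ≤ 2 * (1 + log n) := by
  have hne := arc_nonempty h3 a
  have hin : ∑ t ∈ range (n / 3), (dArc n a (a + t) : ℝ)⁻¹ = 0 := by
    refine sum_eq_zero fun t ht => ?_
    have ht' := mem_range.mp ht
    have hmem := (add_natCast_mem_arc_iff a (by omega)).mpr ht'
    rw [(dArc_eq_zero_iff hne).mpr hmem, Nat.cast_zero, inv_zero]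
  have hout : ∑ t ∈ Ico (n / 3) n, (dArc n a (a + t) : ℝ)⁻¹ =
      ∑ t ∈ Ico (n / 3) n, ((min (t + 1 - n / 3) (n - t) : ℕ) : ℝ)⁻¹ :=
    sum_congr rfl fun t ht => by
      rw [dArc_add_natCast h3 a (mem_Ico.mp ht).1 (mem_Ico.mp ht).2]
  rw [sum_zmod_eq_sum_range_add _ a, ← sum_range_add_sum_Ico _ (Nat.div_le_self n 3), hin, hout,
    zero_add]
  calc _ ≤ 2 * (harmonic (n - n / 3) : ℝ) := sum_Ico_inv_min_le _ _
    _ ≤ 2 * (1 + log (n - n / 3 : ℕ)) := by gcongr; exact harmonic_le_one_add_log _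
    _ ≤ 2 * (1 + log n) := by gcongr <;> norm_cast <;> omega

theorem sum_sq_vI_add_one_sub_le [NeZero n] (h3 : 3 ≤ n) (a : ZMod n) :
    ∑ k, (vI n a (k + 1) - vI n a k) ^ 2 ≤ 4 * dlt n ^ 2 * (1 + log n) :=
  calc _ ≤ ∑ k, dlt n ^ 2 * ((dArc n a k : ℝ)⁻¹ + (dArc n a (k + 1) : ℝ)⁻¹) :=
        sum_le_sum fun k _ => sq_vI_add_one_sub_le h3 a k
    _ = 2 * dlt n ^ 2 * ∑ k, (dArc n a k : ℝ)⁻¹ := by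
        have hshift : ∑ k, (dArc n a (k + 1) : ℝ)⁻¹ = ∑ k, (dArc n a k : ℝ)⁻¹ :=
          Equiv.sum_comp (Equiv.addRight 1) fun k => (dArc n a k : ℝ)⁻¹
        rw [← mul_sum, sum_add_distrib, hshift]
        ring
    _ ≤ 2 * dlt n ^ 2 * (2 * (1 + log n)) := by gcongr; exact sum_inv_dArc_le h3 a
    _ = 4 * dlt n ^ 2 * (1 + log n) := by ring

end GradientOfVI

theorem one_le_log_of_three_le {n : ℕ} (h3 : 3 ≤ n) : 1 ≤ log n := by
  rw [Real.le_log_iff_exp_le (by positivity)]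
  calc exp 1 ≤ 3 := (Real.exp_one_lt_d9.trans (by norm_num)).le
    _ ≤ n := by exact_mod_cast h3

/-- `Σ_{I ∈ 𝓘} Σ_{A ⊆ I} Σ_{k ∈ ZMod n} (v^I_{k+1} - v^I_k)² ≤ C·log n`. -/
theorem sum_vI_gradient_sq_le :
    ∃ C : ℝ, 0 < C ∧
      ∀ (n : ℕ) [NeZero n], 3 ≤ n →
        (∑ a : ZMod n, ∑ _A ∈ (arc n a).powerset, ∑ k : ZMod n,
            (vI n a (k + 1) - vI n a k) ^ 2) ≤ C * Real.log n := by
  refine ⟨8, by norm_num, fun n _ h3 => ?_⟩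
  have hsize : (n : ℝ) * 2 ^ (n / 3) * dlt n ^ 2 ≤ 1 :=
    calc _ ≤ (n : ℝ) * 2 ^ (n / 3) * ((n : ℝ) * 2 ^ (n / 3))⁻¹ := by
          gcongr; exact dlt_sq_le (by omega)
      _ = 1 := mul_inv_cancel₀ (by positivity)
  calc _ = ∑ a : ZMod n, 2 ^ (n / 3) * ∑ k, (vI n a (k + 1) - vI n a k) ^ 2 := by
        simp only [sum_const, card_powerset, card_arc, nsmul_eq_mul, Nat.cast_pow, Nat.cast_ofNat]
    _ ≤ ∑ _a : ZMod n, 2 ^ (n / 3) * (4 * dlt n ^ 2 * (1 + log n)) := by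
        gcongr with a
        exact sum_sq_vI_add_one_sub_le h3 a
    _ = (n * 2 ^ (n / 3) * dlt n ^ 2) * (4 * (1 + log n)) := by
        rw [sum_const, card_univ, ZMod.card, nsmul_eq_mul]
        ring
    _ ≤ 8 * log n := by nlinarith [one_le_log_of_three_le h3]
end

section
/- There is a universal constant C > 0 with the following property. Let G be a finite Abelian (additive) group, ρ an invariant metric on G, and p ∈ (1, 2). Suppose D ≥ 1 and there exist a complex inner product space H and f : G → H with √(ρ(x, y)) ≤ ‖f(x) − f(y)‖ ≤ D·√(ρ(x, y)) for all x, y. Then there exist nonnegative reals (a_χ), indexed by the characters χ of G, such that for all x, y ∈ G: ρ(x, y) ≤ 4·D²·Σ_χ a_χ·|χ(x) − χ(y)|^p ≤ (C·D⁴/(p − 1))·ρ(x, y). Consequently (G, ρ^{1/p}) embeds into a weighted ℓ_p space over the characters with distortion O(D^{4/p}/(p − 1)). -/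
/-!
Put `b χ = ‖∑ w, χ w • f w‖²`. By Plancherel, `ψ v := ∑ χ, b χ ‖χ v - 1‖²` equals
`|G| ∑ w, ‖f w - f (w - v)‖²`, so `|G|² ρ(v, 0) ≤ ψ v ≤ |G|² D² ρ(v, 0)`. As `‖χ v - 1‖ ≤ 2`,
`ψ v ≤ 2 ψₚ v` for `ψₚ v := ∑ χ, b χ ‖χ v - 1‖ ^ p`, which is the lower bound.

For the upper bound, every `N`-th root of unity `z` satisfies
`‖z - 1‖ ^ p ≤ 4 ∑_{m ≤ N} m ^ (-1-p) ‖z ^ m - 1‖²`: up to the first `m₀` with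
`‖z ^ m₀ - 1‖ ≥ 1` the powers of `z` have real part `> 1/2`, so `‖z ^ m - 1‖ ≥ m ‖z - 1‖ / 2`
there, while `m₀ ‖z - 1‖ ≥ 1`. Summing against `b` gives `ψₚ v ≤ 4 ∑ m ^ (-1-p) ψ (m • v)`, and
`ρ(m • v, 0) ≤ m ρ(v, 0)` together with `∑ m ^ (-p) ≤ p / (p - 1)` finishes the proof.
-/

open Finset
open scoped InnerProductSpace

namespace Real

-- The tangent line at `a + 1` of the convex function `x ↦ x ^ (1 - p)`.
lemma sub_one_mul_add_one_rpow_neg_le {p a : ℝ} (hp1 : 1 ≤ p) (hp2 : p ≤ 2) (ha : 0 < a) :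
    (p - 1) * (a + 1) ^ (-p) ≤ a ^ (1 - p) - (a + 1) ^ (1 - p) := by
  have ha1 : 0 < a + 1 := by linarith
  have hr : 0 < a / (a + 1) := by positivity
  have hbern : (a / (a + 1)) ^ (p - 1) ≤ 1 - (p - 1) / (a + 1) := by
    have := rpow_one_add_le_one_add_mul_self (s := -(a + 1)⁻¹)
      (by rw [neg_le_neg_iff]; exact inv_le_one_of_one_le₀ (by linarith)) (p := p - 1)
      (by linarith) (by linarith)
    convert this using 2 <;> field_simp <;> ring
  have hinv : 1 + (p - 1) / (a + 1) ≤ (a / (a + 1)) ^ (1 - p) := by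
    have hs : 0 ≤ (p - 1) / (a + 1) := div_nonneg (by linarith) ha1.le
    rw [show 1 - p = -(p - 1) by ring, rpow_neg hr.le, ← one_div,
      le_div_iff₀ (by positivity)]
    nlinarith
  have ha_eq : a ^ (1 - p) = (a / (a + 1)) ^ (1 - p) * (a + 1) ^ (1 - p) := by
    rw [← mul_rpow hr.le ha1.le, div_mul_cancel₀ _ ha1.ne']
  have h_eq : (p - 1) * (a + 1) ^ (-p) = (p - 1) / (a + 1) * (a + 1) ^ (1 - p) := by
    rw [show 1 - p = -p + 1 by ring, rpow_add_one ha1.ne']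
    field_simp
  rw [h_eq, ha_eq]
  nlinarith [rpow_pos_of_pos ha1 (1 - p)]

lemma sum_Icc_rpow_neg_le {p : ℝ} (hp1 : 1 < p) (hp2 : p ≤ 2) (N : ℕ) :
    ∑ m ∈ Icc 1 N, (m : ℝ) ^ (-p) ≤ p / (p - 1) := by
  have hp : 0 < p - 1 := by linarith
  have key : ∀ n : ℕ, 1 ≤ n →
      ∑ m ∈ Icc 1 n, (m : ℝ) ^ (-p) + (n : ℝ) ^ (1 - p) / (p - 1) ≤ p / (p - 1) := by
    intro n hn
    induction n, hn using Nat.le_induction with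
    | base => field_simp; simp
    | succ n hn ih =>
      have := sub_one_mul_add_one_rpow_neg_le hp1.le hp2 (a := n) (by positivity)
      rw [sum_Icc_succ_top (by omega)]
      push_cast at this ⊢
      have h : ((n : ℝ) + 1) ^ (-p) + ((n : ℝ) + 1) ^ (1 - p) / (p - 1)
          ≤ (n : ℝ) ^ (1 - p) / (p - 1) := by
        rw [add_div' _ _ _ hp.ne', div_le_div_iff_of_pos_right hp]
        linarith
      linarith
  rcases N.eq_zero_or_pos with rfl | hN
  · rw [Icc_eq_empty (by norm_num), sum_empty]
    positivity
  · linarith [key N hN, div_nonneg (rpow_nonneg N.cast_nonneg (1 - p)) hp.le]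

lemma sq_le_two_mul_rpow {t p : ℝ} (ht0 : 0 ≤ t) (ht2 : t ≤ 2) (hp1 : 1 ≤ p) (hp2 : p ≤ 2) :
    t ^ 2 ≤ 2 * t ^ p := by
  calc t ^ 2 = t ^ p * t ^ (2 - p) := by
        rw [← rpow_add' ht0 (by norm_num), add_sub_cancel, rpow_two]
    _ ≤ t ^ p * 2 ^ (1 : ℝ) := by
        gcongr
        calc t ^ (2 - p) ≤ 2 ^ (2 - p) := by gcongr
          _ ≤ 2 ^ (1 : ℝ) := rpow_le_rpow_of_exponent_le one_le_two (by linarith)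
    _ = 2 * t ^ p := by rw [rpow_one, mul_comm]

lemma rpow_le_sq_mul_natCast_rpow {p t : ℝ} (hp : p ≤ 2) (ht : 0 < t) {n : ℕ}
    (hnt : 1 ≤ n * t) : t ^ p ≤ t ^ 2 * (n : ℝ) ^ (2 - p) := by
  have htn : t⁻¹ ≤ n := by rwa [inv_le_iff_one_le_mul₀ ht]
  calc t ^ p = t ^ 2 * t⁻¹ ^ (2 - p) := by
        rw [inv_rpow ht.le, ← rpow_neg ht.le, ← rpow_natCast,
          ← rpow_add ht]
        norm_num
    _ ≤ t ^ 2 * (n : ℝ) ^ (2 - p) := by gcongr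

lemma natCast_rpow_le_sum_Icc_rpow {p : ℝ} (hp : 1 ≤ p) {n : ℕ} (hn : 0 < n) :
    (n : ℝ) ^ (2 - p) ≤ ∑ m ∈ Icc 1 n, (m : ℝ) ^ (1 - p) := by
  calc (n : ℝ) ^ (2 - p) = ∑ _m ∈ Icc 1 n, (n : ℝ) ^ (1 - p) := by
        rw [sum_const, Nat.card_Icc, add_tsub_cancel_right, nsmul_eq_mul,
          show 2 - p = 1 + (1 - p) by ring, rpow_add (by positivity), rpow_one]
    _ ≤ ∑ m ∈ Icc 1 n, (m : ℝ) ^ (1 - p) := by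
        refine sum_le_sum fun m hm => ?_
        obtain ⟨hm1, hmn⟩ := mem_Icc.1 hm
        exact rpow_le_rpow_of_nonpos (by exact_mod_cast hm1) (by exact_mod_cast hmn)
          (by linarith)

lemma sq_bounds_of_sqrt_bounds {a t D : ℝ} (ha : 0 ≤ a) (h : √a ≤ t ∧ t ≤ D * √a) :
    a ≤ t ^ 2 ∧ t ^ 2 ≤ D ^ 2 * a := by
  have ht : 0 ≤ t := (sqrt_nonneg a).trans h.1
  refine ⟨(sqrt_le_left ht).1 h.1, ?_⟩
  calc t ^ 2 ≤ (D * √a) ^ 2 := pow_le_pow_left₀ ht h.2 2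
    _ = D ^ 2 * a := by rw [mul_pow, sq_sqrt ha]

end Real

namespace Complex

variable {z : ℂ}

lemma half_lt_re_of_norm_sub_one_lt_one (hz : ‖z‖ = 1) (h : ‖z - 1‖ < 1) : 1 / 2 < z.re := by
  have := norm_sub_one_sq_eq_of_norm_eq_one hz
  nlinarith [norm_nonneg (z - 1)]

lemma norm_pow_sub_one_le (hz : ‖z‖ = 1) (k : ℕ) : ‖z ^ k - 1‖ ≤ k * ‖z - 1‖ := by
  rw [← geom_sum_mul, norm_mul]
  gcongr
  calc ‖∑ j ∈ range k, z ^ j‖ ≤ ∑ j ∈ range k, ‖z ^ j‖ := norm_sum_le _ _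
    _ = k := by simp [hz]

lemma mul_norm_sub_one_le_two_mul_norm_pow_sub_one (hz : ‖z‖ = 1) {k : ℕ}
    (hnear : ∀ j ∈ Ioo 0 k, ‖z ^ j - 1‖ < 1) : k * ‖z - 1‖ ≤ 2 * ‖z ^ k - 1‖ := by
  have hre : (k : ℝ) / 2 ≤ (∑ j ∈ range k, z ^ j).re := by
    rw [re_sum]
    calc (k : ℝ) / 2 = ∑ _j ∈ range k, (1 / 2 : ℝ) := by simp [div_eq_mul_inv]
      _ ≤ ∑ j ∈ range k, (z ^ j).re := by
        refine sum_le_sum fun j hj => ?_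
        rcases j.eq_zero_or_pos with rfl | hj0
        · norm_num
        · exact (half_lt_re_of_norm_sub_one_lt_one (by simp [hz])
            (hnear j (mem_Ioo.2 ⟨hj0, mem_range.1 hj⟩))).le
  rw [← geom_sum_mul, norm_mul]
  nlinarith [re_le_norm (∑ j ∈ range k, z ^ j), norm_nonneg (z - 1)]

lemma exists_least_one_le_norm_pow_sub_one (hz : ‖z‖ = 1) (hz1 : z ≠ 1) {N : ℕ} (hN : 0 < N)
    (hzN : z ^ N = 1) :
    ∃ m ∈ Icc 1 N, 1 ≤ ‖z ^ m - 1‖ ∧ ∀ j ∈ Ioo 0 m, ‖z ^ j - 1‖ < 1 := by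
  classical
  have hex : ∃ m, 0 < m ∧ m ≤ N ∧ 1 ≤ ‖z ^ m - 1‖ := by
    by_contra! hnear
    have := mul_norm_sub_one_le_two_mul_norm_pow_sub_one hz (k := N)
      fun j hj => hnear j (mem_Ioo.1 hj).1 (mem_Ioo.1 hj).2.le
    rw [hzN, sub_self, norm_zero, mul_zero] at this
    have : ‖z - 1‖ = 0 := by
      nlinarith [norm_nonneg (z - 1), (Nat.cast_pos (α := ℝ)).2 hN]
    exact hz1 (sub_eq_zero.1 (norm_eq_zero.1 this))
  have hex' : ∃ m, 0 < m ∧ 1 ≤ ‖z ^ m - 1‖ := hex.imp fun m hm => ⟨hm.1, hm.2.2⟩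
  obtain ⟨m, hm0, hmN, hm1⟩ := hex
  refine ⟨Nat.find hex', mem_Icc.2 ⟨(Nat.find_spec hex').1, ?_⟩, (Nat.find_spec hex').2,
    fun j hj => ?_⟩
  · exact (Nat.find_min' hex' ⟨hm0, hm1⟩).trans hmN
  · exact not_le.1 fun h => Nat.find_min hex' (mem_Ioo.1 hj).2 ⟨(mem_Ioo.1 hj).1, h⟩

lemma norm_sub_one_rpow_le {p : ℝ} (hp1 : 1 ≤ p) (hp2 : p ≤ 2) (hz : ‖z‖ = 1) {N : ℕ}
    (hN : 0 < N) (hzN : z ^ N = 1) :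
    ‖z - 1‖ ^ p ≤ 4 * ∑ m ∈ Icc 1 N, (m : ℝ) ^ (-1 - p) * ‖z ^ m - 1‖ ^ 2 := by
  have hterm : ∀ m ∈ Icc 1 N, 0 ≤ (m : ℝ) ^ (-1 - p) * ‖z ^ m - 1‖ ^ 2 := fun m _ =>
    mul_nonneg (Real.rpow_nonneg m.cast_nonneg _) (sq_nonneg _)
  rcases eq_or_ne z 1 with rfl | hz1
  · rw [sub_self, norm_zero, Real.zero_rpow (by linarith)]
    exact mul_nonneg zero_le_four (sum_nonneg hterm)
  obtain ⟨m₀, hm₀, hfar, hnear⟩ := exists_least_one_le_norm_pow_sub_one hz hz1 hN hzN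
  have ht : 0 < ‖z - 1‖ := norm_pos_iff.2 (sub_ne_zero.2 hz1)
  have hgrow : ∀ m ∈ Icc 1 m₀, m * ‖z - 1‖ ≤ 2 * ‖z ^ m - 1‖ := fun m hm =>
    mul_norm_sub_one_le_two_mul_norm_pow_sub_one hz fun j hj =>
      hnear j (mem_Ioo.2 ⟨(mem_Ioo.1 hj).1, (mem_Ioo.1 hj).2.trans_le (mem_Icc.1 hm).2⟩)
  calc ‖z - 1‖ ^ p ≤ ‖z - 1‖ ^ 2 * (m₀ : ℝ) ^ (2 - p) :=
        Real.rpow_le_sq_mul_natCast_rpow hp2 ht (hfar.trans (norm_pow_sub_one_le hz m₀))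
    _ ≤ ‖z - 1‖ ^ 2 * ∑ m ∈ Icc 1 m₀, (m : ℝ) ^ (1 - p) := by
        gcongr; exact Real.natCast_rpow_le_sum_Icc_rpow hp1 (mem_Icc.1 hm₀).1
    _ = 4 * ∑ m ∈ Icc 1 m₀, (m : ℝ) ^ (-1 - p) * (m * ‖z - 1‖ / 2) ^ 2 := by
        rw [mul_sum, mul_sum]
        refine sum_congr rfl fun m hm => ?_
        have hm : (0 : ℝ) < m := by exact_mod_cast (mem_Icc.1 hm).1
        rw [show (1 : ℝ) - p = -1 - p + 2 by ring, Real.rpow_add hm, Real.rpow_two]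
        ring
    _ ≤ 4 * ∑ m ∈ Icc 1 m₀, (m : ℝ) ^ (-1 - p) * ‖z ^ m - 1‖ ^ 2 := by
        gcongr with m hm
        linarith [hgrow m hm]
    _ ≤ 4 * ∑ m ∈ Icc 1 N, (m : ℝ) ^ (-1 - p) * ‖z ^ m - 1‖ ^ 2 := by
        gcongr 4 * ?_
        exact sum_le_sum_of_subset_of_nonneg (Icc_subset_Icc_right (mem_Icc.1 hm₀).2)
          fun m hm _ => hterm m hm

end Complex

namespace AddChar

variable {G : Type*} [AddCommGroup G] [Fintype G]

lemma pow_card_eq_one (χ : AddChar G ℂ) (u : G) : χ u ^ Fintype.card G = 1 := by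
  rw [← map_nsmul_eq_pow, card_nsmul_eq_zero, map_zero_eq_one]

lemma norm_sub_eq_norm_sub_one (χ : AddChar G ℂ) (x y : G) :
    ‖χ x - χ y‖ = ‖χ (x - y) - 1‖ := by
  rw [show χ x = χ y * χ (x - y) by rw [← map_add_eq_mul, add_sub_cancel], ← mul_sub_one,
    norm_mul, norm_apply, one_mul]

variable {H : Type*} [NormedAddCommGroup H] [InnerProductSpace ℂ H]

lemma sum_norm_sum_smul_sq (g : G → H) :
    ∑ χ : AddChar G ℂ, ‖∑ w, χ w • g w‖ ^ 2 = Fintype.card G * ∑ w, ‖g w‖ ^ 2 := by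
  classical
  have hinner : ∑ χ : AddChar G ℂ, ⟪∑ w, χ w • g w, ∑ w, χ w • g w⟫_ℂ
      = Fintype.card G * ∑ w, ⟪g w, g w⟫_ℂ := by
    calc ∑ χ : AddChar G ℂ, ⟪∑ w, χ w • g w, ∑ w, χ w • g w⟫_ℂ
        = ∑ w, ∑ w', (∑ χ : AddChar G ℂ, χ (w' - w)) * ⟪g w, g w'⟫_ℂ := by
          simp_rw [sum_inner, inner_sum, inner_smul_left, inner_smul_right, sum_mul]
          rw [sum_comm]
          refine sum_congr rfl fun w _ => ?_
          rw [sum_comm]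
          refine sum_congr rfl fun w' _ => sum_congr rfl fun χ _ => ?_
          rw [sub_eq_add_neg, map_add_eq_mul, map_neg_eq_conj]
          ring
      _ = Fintype.card G * ∑ w, ⟪g w, g w⟫_ℂ := by
          simp [sum_apply_eq_ite, sub_eq_zero, mul_sum]
  have := congrArg Complex.re hinner
  simpa [norm_sq_eq_re_inner (𝕜 := ℂ), Complex.re_sum] using this

lemma sum_smul_sub_translate (χ : AddChar G ℂ) (f : G → H) (v : G) :
    ∑ w, χ w • (f w - f (w - v)) = (1 - χ v) • ∑ w, χ w • f w := by
  have htranslate : ∑ w, χ w • f (w - v) = χ v • ∑ w, χ w • f w := by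
    rw [smul_sum]
    exact Fintype.sum_equiv (Equiv.subRight v) _ _ fun w => by
      rw [Equiv.subRight_apply, smul_smul, ← map_add_eq_mul, add_sub_cancel]
  rw [sub_smul, one_smul, ← htranslate, ← sum_sub_distrib]
  simp_rw [smul_sub]

lemma sum_norm_sum_smul_sq_mul_norm_sub_one_sq (f : G → H) (v : G) :
    ∑ χ : AddChar G ℂ, ‖∑ w, χ w • f w‖ ^ 2 * ‖χ v - 1‖ ^ 2
      = Fintype.card G * ∑ w, ‖f w - f (w - v)‖ ^ 2 := by
  rw [← sum_norm_sum_smul_sq]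
  refine sum_congr rfl fun χ _ => ?_
  rw [sum_smul_sub_translate, norm_smul, norm_sub_rev, mul_pow, mul_comm]

lemma sum_mul_norm_sub_one_sq_le_two_mul_sum_rpow {b : AddChar G ℂ → ℝ} (hb : ∀ χ, 0 ≤ b χ)
    {p : ℝ} (hp1 : 1 ≤ p) (hp2 : p ≤ 2) (u : G) :
    ∑ χ, b χ * ‖χ u - 1‖ ^ 2 ≤ 2 * ∑ χ, b χ * ‖χ u - 1‖ ^ p := by
  rw [mul_sum]
  refine sum_le_sum fun χ _ => ?_
  have h2 : ‖χ u - 1‖ ≤ 2 := (norm_sub_le _ _).trans (by norm_num)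
  nlinarith [hb χ, Real.sq_le_two_mul_rpow (norm_nonneg (χ u - 1)) h2 hp1 hp2]

lemma sum_mul_norm_sub_one_rpow_le {b : AddChar G ℂ → ℝ} (hb : ∀ χ, 0 ≤ b χ)
    {p : ℝ} (hp1 : 1 < p) (hp2 : p ≤ 2) {u : G} {c : ℝ}
    (hc : ∀ m : ℕ, ∑ χ, b χ * ‖χ (m • u) - 1‖ ^ 2 ≤ m * c) :
    ∑ χ, b χ * ‖χ u - 1‖ ^ p ≤ 4 * c * (p / (p - 1)) := by
  have hc0 : 0 ≤ c := by
    simpa using (sum_nonneg fun χ _ => mul_nonneg (hb χ) (sq_nonneg _)).trans (hc 1)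
  calc ∑ χ, b χ * ‖χ u - 1‖ ^ p
      ≤ ∑ χ, b χ * (4 * ∑ m ∈ Icc 1 (Fintype.card G),
          (m : ℝ) ^ (-1 - p) * ‖χ u ^ m - 1‖ ^ 2) := by
        refine sum_le_sum fun χ _ => mul_le_mul_of_nonneg_left ?_ (hb χ)
        exact Complex.norm_sub_one_rpow_le hp1.le hp2 (norm_apply _ _) Fintype.card_pos
          (pow_card_eq_one χ u)
    _ = 4 * ∑ m ∈ Icc 1 (Fintype.card G),
          (m : ℝ) ^ (-1 - p) * ∑ χ, b χ * ‖χ (m • u) - 1‖ ^ 2 := by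
        simp_rw [map_nsmul_eq_pow, mul_sum]
        rw [sum_comm]
        refine sum_congr rfl fun m _ => sum_congr rfl fun χ _ => by ring
    _ ≤ 4 * ∑ m ∈ Icc 1 (Fintype.card G), (m : ℝ) ^ (-1 - p) * (m * c) := by
        gcongr with m; exact hc m
    _ = 4 * c * ∑ m ∈ Icc 1 (Fintype.card G), (m : ℝ) ^ (-p) := by
        rw [mul_sum, mul_sum]
        refine sum_congr rfl fun m hm => ?_
        have hm : (0 : ℝ) < m := by exact_mod_cast (mem_Icc.1 hm).1
        rw [show -p = -1 - p + 1 by ring, Real.rpow_add_one hm.ne']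
        ring
    _ ≤ 4 * c * (p / (p - 1)) := by
        gcongr; exact Real.sum_Icc_rpow_neg_le hp1 hp2 _

end AddChar

section InvariantMetric

variable {G : Type*} {ρ : G → G → ℝ}

lemma nonneg_of_symm_of_triangle (hsymm : ∀ x y, ρ x y = ρ y x)
    (htri : ∀ x y z, ρ x z ≤ ρ x y + ρ y z) (hself : ∀ x, ρ x x = 0) (x y : G) :
    0 ≤ ρ x y := by
  linarith [htri x y x, hsymm x y, hself x]

lemma nsmul_le_of_invariant [AddMonoid G] (htri : ∀ x y z, ρ x z ≤ ρ x y + ρ y z)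
    (hinv : ∀ x y z, ρ (z + x) (z + y) = ρ x y) (hself : ∀ x, ρ x x = 0) (m : ℕ) (u : G) :
    ρ (m • u) 0 ≤ m * ρ u 0 := by
  induction m with
  | zero => simp [hself]
  | succ m ih =>
    have hstep : ρ ((m + 1) • u) (m • u) = ρ u 0 := by
      rw [succ_nsmul, ← hinv u 0 (m • u), add_zero]
    push_cast
    linarith [htri ((m + 1) • u) (m • u) 0]

lemma eq_sub_zero_of_invariant [AddCommGroup G] (hinv : ∀ x y z, ρ (z + x) (z + y) = ρ x y)
    (x y : G) : ρ x y = ρ (x - y) 0 := by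
  rw [← hinv (x - y) 0 y, add_sub_cancel, add_zero]

end InvariantMetric

lemma sq_bounds_norm_sub_translate {G H : Type*} [AddCommGroup G] [SeminormedAddCommGroup H]
    {ρ : G → G → ℝ} {D : ℝ} {f : G → H} (hρ : ∀ x y, 0 ≤ ρ x y)
    (hinv : ∀ x y z, ρ (z + x) (z + y) = ρ x y)
    (hf : ∀ x y, √(ρ x y) ≤ ‖f x - f y‖ ∧ ‖f x - f y‖ ≤ D * √(ρ x y)) (v w : G) :
    ρ v 0 ≤ ‖f w - f (w - v)‖ ^ 2 ∧ ‖f w - f (w - v)‖ ^ 2 ≤ D ^ 2 * ρ v 0 := by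
  have hvw : ρ w (w - v) = ρ v 0 := by rw [← hinv v 0 (w - v), sub_add_cancel, add_zero]
  simpa only [hvw] using Real.sq_bounds_of_sqrt_bounds (hρ _ _) (hf w (w - v))

section Embedding

variable {G : Type*} [AddCommGroup G] [Fintype G] {H : Type*} [NormedAddCommGroup H]
  [InnerProductSpace ℂ H] {ρ : G → G → ℝ} {D : ℝ} {f : G → H}

lemma card_sq_mul_le_sum_norm_sq_mul_norm_sub_one_sq (hρ : ∀ x y, 0 ≤ ρ x y)
    (hinv : ∀ x y z, ρ (z + x) (z + y) = ρ x y)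
    (hf : ∀ x y, √(ρ x y) ≤ ‖f x - f y‖ ∧ ‖f x - f y‖ ≤ D * √(ρ x y)) (v : G) :
    (Fintype.card G : ℝ) ^ 2 * ρ v 0
      ≤ ∑ χ : AddChar G ℂ, ‖∑ w, χ w • f w‖ ^ 2 * ‖χ v - 1‖ ^ 2 := by
  rw [AddChar.sum_norm_sum_smul_sq_mul_norm_sub_one_sq, sq, mul_assoc]
  gcongr
  simpa using sum_le_sum fun w (_ : w ∈ univ) => (sq_bounds_norm_sub_translate hρ hinv hf v w).1

lemma sum_norm_sq_mul_norm_nsmul_sub_one_sq_le (hρ : ∀ x y, 0 ≤ ρ x y)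
    (htri : ∀ x y z, ρ x z ≤ ρ x y + ρ y z) (hself : ∀ x, ρ x x = 0)
    (hinv : ∀ x y z, ρ (z + x) (z + y) = ρ x y)
    (hf : ∀ x y, √(ρ x y) ≤ ‖f x - f y‖ ∧ ‖f x - f y‖ ≤ D * √(ρ x y)) (m : ℕ) (v : G) :
    ∑ χ : AddChar G ℂ, ‖∑ w, χ w • f w‖ ^ 2 * ‖χ (m • v) - 1‖ ^ 2
      ≤ m * ((Fintype.card G : ℝ) ^ 2 * (D ^ 2 * ρ v 0)) := by
  have hmv := nsmul_le_of_invariant htri hinv hself m v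
  calc ∑ χ : AddChar G ℂ, ‖∑ w, χ w • f w‖ ^ 2 * ‖χ (m • v) - 1‖ ^ 2
      ≤ (Fintype.card G : ℝ) ^ 2 * (D ^ 2 * ρ (m • v) 0) := by
        rw [AddChar.sum_norm_sum_smul_sq_mul_norm_sub_one_sq, sq, mul_assoc]
        gcongr
        simpa using sum_le_sum fun w (_ : w ∈ univ) =>
          (sq_bounds_norm_sub_translate hρ hinv hf (m • v) w).2
    _ ≤ (Fintype.card G : ℝ) ^ 2 * (D ^ 2 * (m * ρ v 0)) := by gcongr
    _ = m * ((Fintype.card G : ℝ) ^ 2 * (D ^ 2 * ρ v 0)) := by ring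

end Embedding

/-- There is a universal `C > 0` such that: if `G` is a finite Abelian
group with an invariant metric `ρ`, `1 < p < 2`, and `(G, √ρ)` embeds in a complex inner
product space with distortion `D ≥ 1` (normalized as below), then there are nonnegative
weights `a_χ` on the characters with
`ρ(x,y) ≤ 4·D²·Σ_χ a_χ·|χ(x) - χ(y)|^p ≤ (C·D⁴/(p-1))·ρ(x,y)`, so that `(G, ρ^{1/p})`
embeds in a weighted ℓ_p space over the characters with distortion `O(D^{4/p}/(p-1))`. -/
theorem abelian_negative_type_embeds_in_Lp :
    ∃ C : ℝ, 0 < C ∧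
      ∀ (G : Type) [AddCommGroup G] [Fintype G] (ρ : G → G → ℝ),
        (∀ x y, ρ x y = ρ y x) →
        (∀ x y z, ρ x z ≤ ρ x y + ρ y z) →
        (∀ x y, ρ x y = 0 ↔ x = y) →
        (∀ x y z : G, ρ (z + x) (z + y) = ρ x y) →
        ∀ p : ℝ, 1 < p → p < 2 →
        ∀ D : ℝ, 1 ≤ D →
        ∀ (H : Type) [NormedAddCommGroup H] [InnerProductSpace ℂ H] (f : G → H),
        (∀ x y : G,
          Real.sqrt (ρ x y) ≤ ‖f x - f y‖ ∧ ‖f x - f y‖ ≤ D * Real.sqrt (ρ x y)) →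
        ∃ a : AddChar G ℂ → ℝ, (∀ χ, 0 ≤ a χ) ∧
          ∀ x y : G,
            ρ x y ≤ 4 * D ^ 2 * (∑ χ : AddChar G ℂ, a χ * ‖χ x - χ y‖ ^ p) ∧
              4 * D ^ 2 * (∑ χ : AddChar G ℂ, a χ * ‖χ x - χ y‖ ^ p) ≤
                C * D ^ 4 / (p - 1) * ρ x y := by
  refine ⟨16, by norm_num, fun G _ _ ρ hsymm htri hzero hinv p hp1 hp2 D hD H _ _ f hf => ?_⟩
  have hself : ∀ x, ρ x x = 0 := fun x => (hzero x x).2 rfl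
  have hρ := nonneg_of_symm_of_triangle hsymm htri hself
  have hn : (0 : ℝ) < Fintype.card G := Nat.cast_pos.2 Fintype.card_pos
  set n : ℝ := (Fintype.card G : ℝ)
  set b : AddChar G ℂ → ℝ := fun χ => ‖∑ w, χ w • f w‖ ^ 2
  have hb : ∀ χ, 0 ≤ b χ := fun χ => sq_nonneg _
  refine ⟨fun χ => b χ / (2 * D ^ 2 * n ^ 2), fun χ => by positivity, fun x y => ?_⟩
  set S := ∑ χ, b χ * ‖χ (x - y) - 1‖ ^ p
  have hS : 4 * D ^ 2 * ∑ χ, b χ / (2 * D ^ 2 * n ^ 2) * ‖χ x - χ y‖ ^ p = 2 / n ^ 2 * S := by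
    simp_rw [S, AddChar.norm_sub_eq_norm_sub_one, mul_sum]
    refine sum_congr rfl fun χ _ => ?_
    field_simp
    ring
  have hlower : n ^ 2 * ρ (x - y) 0 ≤ 2 * S :=
    (card_sq_mul_le_sum_norm_sq_mul_norm_sub_one_sq hρ hinv hf _).trans
      (AddChar.sum_mul_norm_sub_one_sq_le_two_mul_sum_rpow hb hp1.le hp2.le _)
  have hupper : S ≤ 4 * (n ^ 2 * (D ^ 2 * ρ (x - y) 0)) * (p / (p - 1)) :=
    AddChar.sum_mul_norm_sub_one_rpow_le hb hp1 hp2.le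
      (sum_norm_sq_mul_norm_nsmul_sub_one_sq_le hρ htri hself hinv hf · _)
  rw [hS, eq_sub_zero_of_invariant hinv x y]
  constructor
  · rw [div_mul_eq_mul_div, le_div_iff₀ (by positivity)]
    linarith
  · have hp : 0 < p - 1 := by linarith
    have hD2 : D ^ 2 ≤ D ^ 4 := pow_le_pow_right₀ hD (by norm_num)
    calc 2 / n ^ 2 * S ≤ 2 / n ^ 2 * (4 * (n ^ 2 * (D ^ 2 * ρ (x - y) 0)) * (p / (p - 1))) := by
          gcongr
      _ = 8 * p * D ^ 2 / (p - 1) * ρ (x - y) 0 := by field_simp; ring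
      _ ≤ 16 * D ^ 4 / (p - 1) * ρ (x - y) 0 := by
          have := hρ (x - y) 0
          gcongr
          nlinarith
end
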